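/- arXiv:1804.01362 — 3 statements merged into one kernel-verified Lean document; each statement's English description precedes it below -/
import Mathlib

section
/- Let J be a g-function and let a:Ω→ℂ be α-Hölder. Then for every s>1 the series ζ₊(s) and ζ₋(s) converge absolutely and |ζ₊(s) − ζ₋(s)| ≤ (2^α − 1)^{−1} · Hol_α(a) · d(x,y)^α; in particular (s−1)[ζ₊(s) − ζ₋(s)] → 0 as s→1⁺. -/
open Real MeasureTheory Filter Topology Set

open scoped Classical

namespace GS

/-- The full shift space `Ω = 𝒜^ℕ`. -/
abbrev Omega (𝒜 : Type) : Type := ℕ → 𝒜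

variable {𝒜 : Type}

/-- The left shift `σ(x₁,x₂,…) = (x₂,x₃,…)`. -/
def shift (x : Omega 𝒜) : Omega 𝒜 := fun n => x (n + 1)

/-- Prepending a symbol: `qx = (q,x₁,x₂,…)`. -/
def cons (q : 𝒜) (x : Omega 𝒜) : Omega 𝒜 := fun n => Nat.casesOn n q x

/-- Concatenation `wx` of a finite word `w ∈ 𝒜^k` with `x ∈ Ω`. -/
def concat {k : ℕ} (w : Fin k → 𝒜) (x : Omega 𝒜) : Omega 𝒜 :=
  fun n => if h : n < k then w ⟨n, h⟩ else x (n - k)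

/-- The metric `d(x,y) = 2^{-N(x,y)}`, `N(x,y) = inf{k ≥ 1 : x_k ≠ y_k}`
(sequences are indexed from `0` in Lean, whence the `+ 1`). -/
noncomputable def dOmega (x y : Omega 𝒜) : ℝ :=
  if x = y then 0 else (1 / 2 : ℝ) ^ (sInf {k : ℕ | x k ≠ y k} + 1)

/-- `a : Ω → E` is `α`-Hölder (w.r.t. `dOmega`):
`Hol_α(a) = sup_{x≠y} ‖a x - a y‖ / d(x,y)^α < ∞`. -/
def IsHolderW (α : ℝ) {E : Type*} [NormedAddCommGroup E] (a : Omega 𝒜 → E) : Prop :=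
  ∃ C : ℝ, ∀ x y : Omega 𝒜, ‖a x - a y‖ ≤ C * (dOmega x y) ^ α

/-- The Hölder constant `Hol_α(a) = sup_{x≠y} ‖a x - a y‖ / d(x,y)^α`. -/
noncomputable def HolConst (α : ℝ) {E : Type*} [NormedAddCommGroup E] (a : Omega 𝒜 → E) : ℝ :=
  sSup {r : ℝ | ∃ x y : Omega 𝒜, x ≠ y ∧ r = ‖a x - a y‖ / (dOmega x y) ^ α}

/-- `J` is a `g`-function: continuous, strictly positive, with `∑_{q∈𝒜} J(qx) = 1`. -/
def IsGFunction [Fintype 𝒜] [TopologicalSpace 𝒜] (J : Omega 𝒜 → ℝ) : Prop :=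
  Continuous J ∧ (∀ x, 0 < J x) ∧ ∀ x : Omega 𝒜, ∑ q : 𝒜, J (cons q x) = 1

/-- The Ruelle transfer operator `(L_f φ)(x) = ∑_{q∈𝒜} e^{f(qx)} φ(qx)`. -/
noncomputable def ruelle [Fintype 𝒜] {E : Type*} [AddCommMonoid E] [Module ℝ E]
    (f : Omega 𝒜 → ℝ) (φ : Omega 𝒜 → E) : Omega 𝒜 → E :=
  fun x => ∑ q : 𝒜, Real.exp (f (cons q x)) • φ (cons q x)

/-- Birkhoff sum `S_k(f) = ∑_{j=0}^{k-1} f ∘ σ^j`. -/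
def birkhoff (f : Omega 𝒜 → ℝ) (k : ℕ) (x : Omega 𝒜) : ℝ :=
  ∑ j ∈ Finset.range k, f (shift^[j] x)

/-- `𝕁(wx) = exp (S_k(log J)(wx))` for a word `w` of length `k`. -/
noncomputable def JBirk (J : Omega 𝒜 → ℝ) (k : ℕ) (w : Fin k → 𝒜) (x : Omega 𝒜) : ℝ :=
  Real.exp (birkhoff (fun z => Real.log (J z)) k (concat w x))

/-- `ζ₊(s) = ∑_{k≥1} ∑_{w∈𝒜^k} a(wx) 𝕁(wx)^s`. -/
noncomputable def zetaPlus [Fintype 𝒜] (J : Omega 𝒜 → ℝ) (a : Omega 𝒜 → ℂ) (x : Omega 𝒜)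
    (s : ℝ) : ℂ :=
  ∑' k : ℕ, ∑ w : Fin (k + 1) → 𝒜, a (concat w x) * (((JBirk J (k + 1) w x) ^ s : ℝ) : ℂ)

/-- `ζ₋(s) = ∑_{k≥1} ∑_{w∈𝒜^k} a(wy) 𝕁(wx)^s`. -/
noncomputable def zetaMinus [Fintype 𝒜] (J : Omega 𝒜 → ℝ) (a : Omega 𝒜 → ℂ) (x y : Omega 𝒜)
    (s : ℝ) : ℂ :=
  ∑' k : ℕ, ∑ w : Fin (k + 1) → 𝒜, a (concat w y) * (((JBirk J (k + 1) w x) ^ s : ℝ) : ℂ)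

/-- `L_{log J}^* μ = μ`, i.e. `μ` is a `g`-measure of `J`, tested against continuous functions. -/
def IsGMeasure [Fintype 𝒜] [TopologicalSpace 𝒜] [MeasurableSpace 𝒜]
    (J : Omega 𝒜 → ℝ) (μ : Measure (Omega 𝒜)) : Prop :=
  IsProbabilityMeasure μ ∧
    ∀ φ : Omega 𝒜 → ℂ, Continuous φ →
      ∫ x, ruelle (fun z => Real.log (J z)) φ x ∂μ = ∫ x, φ x ∂μ

/-- The cylinder set determined by a finite word. -/
def cyl {k : ℕ} (w : Fin k → 𝒜) : Set (Omega 𝒜) := {x | ∀ i : Fin k, x (i : ℕ) = w i}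

/-- Entropy of the partition into cylinders of length `n`. -/
noncomputable def blockEntropy [Fintype 𝒜] [MeasurableSpace 𝒜] (μ : Measure (Omega 𝒜))
    (n : ℕ) : ℝ :=
  ∑ w : Fin n → 𝒜, Real.negMulLog (μ (cyl w)).toReal

/-- Kolmogorov–Sinai entropy `h_μ(σ)` of a shift-invariant measure, computed through the
generating partition into cylinders: `h_μ(σ) = lim_n H_n/n = inf_{n≥1} H_n/n`. -/
noncomputable def KSentropy [Fintype 𝒜] [MeasurableSpace 𝒜] (μ : Measure (Omega 𝒜)) : ℝ :=
  ⨅ n : ℕ, blockEntropy μ (n + 1) / (n + 1)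

/-- Topological pressure `P(f) = sup {h_μ(σ) + ∫ f dμ}` over shift-invariant Borel
probability measures. -/
noncomputable def pressure [Fintype 𝒜] [MeasurableSpace 𝒜] (f : Omega 𝒜 → ℝ) : ℝ :=
  sSup {r : ℝ | ∃ μ : Measure (Omega 𝒜), IsProbabilityMeasure μ ∧
    Measure.map shift μ = μ ∧ r = KSentropy μ + ∫ x, f x ∂μ}

/-- `μ` is an equilibrium state of `f`. -/
def IsEquilibrium [Fintype 𝒜] [MeasurableSpace 𝒜] (f : Omega 𝒜 → ℝ)
    (μ : Measure (Omega 𝒜)) : Prop :=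
  IsProbabilityMeasure μ ∧ Measure.map shift μ = μ ∧
    KSentropy μ + ∫ x, f x ∂μ = pressure f

/-- The Walters class `W(Ω,σ)`:
`sup_{n≥1} sup_{w∈𝒜^n} |S_n(f)(wx) − S_n(f)(wy)| → 0` as `d(x,y) → 0`. -/
def WaltersClass [TopologicalSpace 𝒜] (f : Omega 𝒜 → ℝ) : Prop :=
  Continuous f ∧ ∀ ε > (0:ℝ), ∃ δ > (0:ℝ), ∀ x y : Omega 𝒜, dOmega x y < δ →
    ∀ (n : ℕ) (w : Fin n → 𝒜),
      |birkhoff f n (concat w x) - birkhoff f n (concat w y)| ≤ ε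

/-- The set `W*` of finite (nonempty) words over `𝒜`. -/
def Words (𝒜 : Type) : Type := Σ k : ℕ, Fin (k + 1) → 𝒜

end GS
namespace GS

/-! The weights `𝕁(wx)`, `w ∈ 𝒜^k`, form a probability vector: the normalisation of `J`
propagates along the cocycle `𝕁(q w x) = J(q w x) 𝕁(w x)`. On at least two symbols a continuous
`g`-function is bounded by some `c < 1`, so `𝕁(wx)^s ≤ c^{k(s-1)} 𝕁(wx)` and both series are
dominated by a geometric one. For the difference, `d(wx, wy) = 2^{-k} d(x,y)` gives
`|a(wx) - a(wy)| ≤ Hol_α(a) d(x,y)^α 2^{-kα}`; summing against the weights `𝕁(wx)^s ≤ 𝕁(wx)`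
and then over `k ≥ 1` yields `∑ 2^{-kα} = (2^α - 1)⁻¹`. This bound is uniform in `s`, so the
factor `s - 1` kills it. -/

variable {𝒜 : Type}

section Words

lemma cons_zero_shift (x : Omega 𝒜) : cons (x 0) (shift x) = x := by
  funext n; cases n <;> rfl

lemma concat_apply_of_lt {k : ℕ} (w : Fin k → 𝒜) (x : Omega 𝒜) {m : ℕ} (hm : m < k) :
    concat w x m = w ⟨m, hm⟩ :=
  dif_pos hm

@[simp]
lemma concat_apply_add {k : ℕ} (w : Fin k → 𝒜) (x : Omega 𝒜) (m : ℕ) :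
    concat w x (m + k) = x m := by
  simp [concat]

lemma concat_succ {k : ℕ} (w : Fin (k + 1) → 𝒜) (x : Omega 𝒜) :
    concat w x = cons (w 0) (concat (Fin.tail w) x) := by
  funext n
  cases n with
  | zero => exact concat_apply_of_lt w x k.succ_pos
  | succ n =>
    show concat w x (n + 1) = concat (Fin.tail w) x n
    by_cases h : n < k
    · rw [concat_apply_of_lt w x (by omega : n + 1 < k + 1), concat_apply_of_lt _ x h]
      rfl
    · obtain ⟨m, rfl⟩ := Nat.exists_eq_add_of_le (not_lt.mp h)
      rw [show k + m + 1 = m + (k + 1) by omega, add_comm k m, concat_apply_add,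
        concat_apply_add]

lemma concat_cons {k : ℕ} (q : 𝒜) (w : Fin k → 𝒜) (x : Omega 𝒜) :
    concat (Fin.cons q w : Fin (k + 1) → 𝒜) x = cons q (concat w x) := by
  rw [concat_succ, Fin.cons_zero, Fin.tail_cons]

end Words

section Metric

lemma dOmega_nonneg (x y : Omega 𝒜) : 0 ≤ dOmega x y := by
  unfold dOmega; split_ifs <;> positivity

lemma dOmega_pos {x y : Omega 𝒜} (h : x ≠ y) : 0 < dOmega x y := by
  rw [dOmega, if_neg h]; positivity

lemma dOmega_le_one (x y : Omega 𝒜) : dOmega x y ≤ 1 := by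
  unfold dOmega; split_ifs
  · exact zero_le_one
  · exact pow_le_one₀ (by norm_num) (by norm_num)

lemma dOmega_concat {k : ℕ} (w : Fin k → 𝒜) (x y : Omega 𝒜) :
    dOmega (concat w x) (concat w y) = (1 / 2 : ℝ) ^ k * dOmega x y := by
  by_cases hxy : x = y
  · simp [hxy, dOmega]
  obtain ⟨m, hm⟩ := Function.ne_iff.mp hxy
  have hne : concat w x (m + k) ≠ concat w y (m + k) := by simpa using hm
  have hk : k ≤ sInf {n | concat w x n ≠ concat w y n} := by
    refine le_csInf ⟨_, hne⟩ fun n hn => not_lt.mp fun hnk => hn ?_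
    rw [concat_apply_of_lt w x hnk, concat_apply_of_lt w y hnk]
  have hshift := Nat.sInf_add hk
  simp only [concat_apply_add] at hshift
  rw [dOmega, dOmega, if_neg fun h => hne (congrFun h _), if_neg hxy, ← hshift,
    add_right_comm, pow_add, mul_comm]

end Metric

section Holder

variable {α : ℝ} {E : Type*} [NormedAddCommGroup E] {a : Omega 𝒜 → E}

lemma HolConst_nonneg (α : ℝ) (a : Omega 𝒜 → E) : 0 ≤ HolConst α a := by
  refine Real.sSup_nonneg ?_
  rintro r ⟨x, y, -, rfl⟩
  exact div_nonneg (norm_nonneg _) (Real.rpow_nonneg (dOmega_nonneg x y) α)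

lemma IsHolderW.norm_sub_le (hα : 0 < α) (ha : IsHolderW α a) (x y : Omega 𝒜) :
    ‖a x - a y‖ ≤ HolConst α a * dOmega x y ^ α := by
  by_cases hxy : x = y
  · simp [hxy, dOmega, Real.zero_rpow hα.ne']
  obtain ⟨C, hC⟩ := ha
  rw [← div_le_iff₀ (Real.rpow_pos_of_pos (dOmega_pos hxy) α)]
  refine le_csSup ⟨C, ?_⟩ ⟨x, y, hxy, rfl⟩
  rintro r ⟨u, v, huv, rfl⟩
  exact (div_le_iff₀ (Real.rpow_pos_of_pos (dOmega_pos huv) α)).mpr (hC u v)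

lemma IsHolderW.norm_le (hα : 0 < α) (ha : IsHolderW α a) (z x : Omega 𝒜) :
    ‖a z‖ ≤ ‖a x‖ + HolConst α a := by
  have hd : dOmega z x ^ α ≤ 1 :=
    Real.rpow_le_one (dOmega_nonneg z x) (dOmega_le_one z x) hα.le
  calc ‖a z‖ ≤ ‖a x‖ + ‖a z - a x‖ := norm_le_norm_add_norm_sub' (a z) (a x)
    _ ≤ ‖a x‖ + HolConst α a := by
      gcongr
      exact (ha.norm_sub_le hα z x).trans (mul_le_of_le_one_right (HolConst_nonneg α a) hd)

lemma IsHolderW.norm_sub_concat_le (hα : 0 < α) (ha : IsHolderW α a) {k : ℕ}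
    (w : Fin k → 𝒜) (x y : Omega 𝒜) :
    ‖a (concat w x) - a (concat w y)‖
      ≤ HolConst α a * dOmega x y ^ α * ((1 / 2 : ℝ) ^ α) ^ k := by
  refine (ha.norm_sub_le hα _ _).trans_eq ?_
  rw [dOmega_concat, Real.mul_rpow (by positivity) (dOmega_nonneg x y),
    ← Real.rpow_pow_comm (by norm_num)]
  ring

end Holder

section Cocycle

variable {J : Omega 𝒜 → ℝ}

lemma birkhoff_succ (f : Omega 𝒜 → ℝ) (k : ℕ) (z : Omega 𝒜) :
    birkhoff f (k + 1) z = f z + birkhoff f k (shift z) := by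
  simp only [birkhoff, Finset.sum_range_succ', Function.iterate_succ_apply,
    Function.iterate_zero_apply]
  ring

lemma JBirk_pos (J : Omega 𝒜 → ℝ) {k : ℕ} (w : Fin k → 𝒜) (x : Omega 𝒜) :
    0 < JBirk J k w x :=
  Real.exp_pos _

lemma JBirk_succ (hpos : ∀ z, 0 < J z) {k : ℕ} (w : Fin (k + 1) → 𝒜) (x : Omega 𝒜) :
    JBirk J (k + 1) w x = J (concat w x) * JBirk J k (Fin.tail w) x := by
  rw [JBirk, JBirk, birkhoff_succ, Real.exp_add, Real.exp_log (hpos _), concat_succ w x]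
  rfl

lemma JBirk_le_pow (hpos : ∀ z, 0 < J z) {c : ℝ} (hc : ∀ z, J z ≤ c) {k : ℕ}
    (w : Fin k → 𝒜) (x : Omega 𝒜) : JBirk J k w x ≤ c ^ k := by
  induction k with
  | zero => simp [JBirk, birkhoff]
  | succ k ih =>
    rw [JBirk_succ hpos, pow_succ']
    exact mul_le_mul (hc _) (ih _) (JBirk_pos J _ x).le ((hpos (concat w x)).le.trans (hc _))

lemma JBirk_rpow_le (hpos : ∀ z, 0 < J z) {c : ℝ} (hc0 : 0 ≤ c) (hc : ∀ z, J z ≤ c)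
    {s : ℝ} (hs : 1 ≤ s) {k : ℕ} (w : Fin k → 𝒜) (x : Omega 𝒜) :
    JBirk J k w x ^ s ≤ (c ^ (s - 1)) ^ k * JBirk J k w x := by
  have hJ := JBirk_pos J w x
  calc JBirk J k w x ^ s = JBirk J k w x ^ (s - 1) * JBirk J k w x := by
        rw [Real.rpow_sub_one hJ.ne', div_mul_cancel₀ _ hJ.ne']
    _ ≤ (c ^ k) ^ (s - 1) * JBirk J k w x := by
        gcongr
        exact JBirk_le_pow hpos hc w x
    _ = (c ^ (s - 1)) ^ k * JBirk J k w x := by rw [Real.rpow_pow_comm hc0]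

lemma norm_mul_JBirk_rpow (b : ℂ) (J : Omega 𝒜 → ℝ) {k : ℕ} (w : Fin k → 𝒜) (x : Omega 𝒜)
    (s : ℝ) : ‖b * ((JBirk J k w x ^ s : ℝ) : ℂ)‖ = ‖b‖ * JBirk J k w x ^ s := by
  rw [norm_mul, Complex.norm_real, Real.norm_of_nonneg (Real.rpow_nonneg (JBirk_pos J w x).le s)]

variable [Fintype 𝒜]

lemma sum_JBirk_eq_one (hpos : ∀ z, 0 < J z) (hsum : ∀ x, ∑ q : 𝒜, J (cons q x) = 1)
    (k : ℕ) (x : Omega 𝒜) : ∑ w : Fin k → 𝒜, JBirk J k w x = 1 := by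
  induction k with
  | zero => simp [JBirk, birkhoff]
  | succ k ih =>
    rw [← (Fin.consEquiv fun _ => 𝒜).sum_comp, Fintype.sum_prod_type, Finset.sum_comm]
    simp only [Fin.consEquiv, Equiv.coe_fn_mk, JBirk_succ hpos, concat_cons, Fin.tail_cons,
      ← Finset.sum_mul, hsum, one_mul, ih]

lemma JBirk_le_one (hpos : ∀ z, 0 < J z) (hsum : ∀ x, ∑ q : 𝒜, J (cons q x) = 1)
    {k : ℕ} (w : Fin k → 𝒜) (x : Omega 𝒜) : JBirk J k w x ≤ 1 :=
  sum_JBirk_eq_one hpos hsum k x ▸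
    Finset.single_le_sum (fun v _ => (JBirk_pos J v x).le) (Finset.mem_univ w)

lemma sum_JBirk_rpow_le (hpos : ∀ z, 0 < J z) (hsum : ∀ x, ∑ q : 𝒜, J (cons q x) = 1)
    {c : ℝ} (hc0 : 0 ≤ c) (hc : ∀ z, J z ≤ c) {s : ℝ} (hs : 1 ≤ s) (k : ℕ) (x : Omega 𝒜) :
    ∑ w : Fin k → 𝒜, JBirk J k w x ^ s ≤ (c ^ (s - 1)) ^ k :=
  calc ∑ w : Fin k → 𝒜, JBirk J k w x ^ s
      ≤ ∑ w : Fin k → 𝒜, (c ^ (s - 1)) ^ k * JBirk J k w x :=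
        Finset.sum_le_sum fun w _ => JBirk_rpow_le hpos hc0 hc hs w x
    _ = (c ^ (s - 1)) ^ k := by rw [← Finset.mul_sum, sum_JBirk_eq_one hpos hsum, mul_one]

end Cocycle

lemma IsGFunction.exists_lt_one [Fintype 𝒜] [TopologicalSpace 𝒜] {J : Omega 𝒜 → ℝ}
    (hJ : IsGFunction J) (hcard : 2 ≤ Fintype.card 𝒜) :
    ∃ c, 0 ≤ c ∧ c < 1 ∧ ∀ z, J z ≤ c := by
  obtain ⟨hcont, hpos, hsum⟩ := hJ
  have : Nonempty 𝒜 := Fintype.card_pos_iff.mp (by omega)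
  obtain ⟨x₀, -, hx₀⟩ := isCompact_univ.exists_isMaxOn univ_nonempty hcont.continuousOn
  obtain ⟨q, hq⟩ := Fintype.exists_ne_of_one_lt_card (by omega) (x₀ 0)
  refine ⟨J x₀, (hpos x₀).le, ?_, fun z => hx₀ (mem_univ z)⟩
  have hpair := Finset.add_le_sum (fun q _ => (hpos (cons q (shift x₀))).le)
    (Finset.mem_univ (x₀ 0)) (Finset.mem_univ q) hq.symm
  rw [hsum, cons_zero_shift] at hpair
  linarith [hpos (cons q (shift x₀))]

lemma hasSum_half_rpow_pow_succ {α : ℝ} (hα : 0 < α) :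
    HasSum (fun k : ℕ => ((1 / 2 : ℝ) ^ α) ^ (k + 1)) ((2 ^ α - 1)⁻¹) := by
  have h2 : 1 < (2 : ℝ) ^ α := Real.one_lt_rpow (by norm_num) hα
  have hval : (1 / 2 : ℝ) ^ α * (1 - (1 / 2 : ℝ) ^ α)⁻¹ = ((2 : ℝ) ^ α - 1)⁻¹ := by
    rw [one_div, Real.inv_rpow zero_le_two]
    field_simp
  have hr1 : (1 / 2 : ℝ) ^ α < 1 := Real.rpow_lt_one (by norm_num) (by norm_num) hα
  simpa only [← pow_succ', hval] using
    (hasSum_geometric_of_lt_one (by positivity) hr1).mul_left ((1 / 2 : ℝ) ^ α)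

section Series

variable [Fintype 𝒜] {J : Omega 𝒜 → ℝ}

lemma summable_sum_norm_mul_JBirk_rpow (hpos : ∀ z, 0 < J z)
    (hsum : ∀ x, ∑ q : 𝒜, J (cons q x) = 1) {c : ℝ} (hc0 : 0 ≤ c) (hc1 : c < 1)
    (hc : ∀ z, J z ≤ c) {b : Omega 𝒜 → ℂ} {M : ℝ} (hb : ∀ z, ‖b z‖ ≤ M) (x z : Omega 𝒜)
    {s : ℝ} (hs : 1 < s) :
    Summable fun k : ℕ =>
      ∑ w : Fin (k + 1) → 𝒜, ‖b (concat w z) * ((JBirk J (k + 1) w x ^ s : ℝ) : ℂ)‖ := by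
  have hρ0 : 0 ≤ c ^ (s - 1) := Real.rpow_nonneg hc0 _
  have hρ1 : c ^ (s - 1) < 1 := Real.rpow_lt_one hc0 hc1 (by linarith)
  have hM : 0 ≤ M := (norm_nonneg _).trans (hb z)
  refine .of_nonneg_of_le (fun k => Finset.sum_nonneg fun w _ => norm_nonneg _) (fun k => ?_)
    ((summable_nat_add_iff 1).mpr ((summable_geometric_of_lt_one hρ0 hρ1).mul_left M))
  calc ∑ w : Fin (k + 1) → 𝒜, ‖b (concat w z) * ((JBirk J (k + 1) w x ^ s : ℝ) : ℂ)‖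
      = ∑ w : Fin (k + 1) → 𝒜, ‖b (concat w z)‖ * JBirk J (k + 1) w x ^ s := by
        simp only [norm_mul_JBirk_rpow]
    _ ≤ ∑ w : Fin (k + 1) → 𝒜, M * JBirk J (k + 1) w x ^ s :=
        Finset.sum_le_sum fun w _ =>
          mul_le_mul_of_nonneg_right (hb _) (Real.rpow_nonneg (JBirk_pos J w x).le s)
    _ ≤ M * (c ^ (s - 1)) ^ (k + 1) := by
        rw [← Finset.mul_sum]
        exact mul_le_mul_of_nonneg_left (sum_JBirk_rpow_le hpos hsum hc0 hc hs.le _ x) hM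

lemma norm_sum_sub_sum_le (hpos : ∀ z, 0 < J z) (hsum : ∀ x, ∑ q : 𝒜, J (cons q x) = 1)
    {α : ℝ} (hα : 0 < α) {a : Omega 𝒜 → ℂ} (ha : IsHolderW α a) (x y : Omega 𝒜) {s : ℝ}
    (hs : 1 ≤ s) (k : ℕ) :
    ‖∑ w : Fin k → 𝒜, a (concat w x) * ((JBirk J k w x ^ s : ℝ) : ℂ)
        - ∑ w : Fin k → 𝒜, a (concat w y) * ((JBirk J k w x ^ s : ℝ) : ℂ)‖
      ≤ HolConst α a * dOmega x y ^ α * ((1 / 2 : ℝ) ^ α) ^ k := by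
  have hC : 0 ≤ HolConst α a * dOmega x y ^ α * ((1 / 2 : ℝ) ^ α) ^ k := by
    have := HolConst_nonneg α a
    have := dOmega_nonneg x y
    positivity
  rw [← Finset.sum_sub_distrib]
  refine (norm_sum_le _ _).trans ?_
  calc ∑ w : Fin k → 𝒜, ‖a (concat w x) * ((JBirk J k w x ^ s : ℝ) : ℂ)
          - a (concat w y) * ((JBirk J k w x ^ s : ℝ) : ℂ)‖
      = ∑ w : Fin k → 𝒜, ‖a (concat w x) - a (concat w y)‖ * JBirk J k w x ^ s := by
        simp only [← sub_mul, norm_mul_JBirk_rpow]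
    _ ≤ ∑ w : Fin k → 𝒜, HolConst α a * dOmega x y ^ α * ((1 / 2 : ℝ) ^ α) ^ k
          * JBirk J k w x :=
        Finset.sum_le_sum fun w _ => mul_le_mul (ha.norm_sub_concat_le hα w x y)
          (Real.rpow_le_self_of_le_one (JBirk_pos J w x).le (JBirk_le_one hpos hsum w x) hs)
          (Real.rpow_nonneg (JBirk_pos J w x).le s) hC
    _ = HolConst α a * dOmega x y ^ α * ((1 / 2 : ℝ) ^ α) ^ k := by
        rw [← Finset.mul_sum, sum_JBirk_eq_one hpos hsum, mul_one]

lemma norm_zetaPlus_sub_zetaMinus_le (hpos : ∀ z, 0 < J z)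
    (hsum : ∀ x, ∑ q : 𝒜, J (cons q x) = 1) {α : ℝ} (hα : 0 < α) {a : Omega 𝒜 → ℂ}
    (ha : IsHolderW α a) {x y : Omega 𝒜} {s : ℝ} (hs : 1 ≤ s)
    (hx : Summable fun k : ℕ =>
      ∑ w : Fin (k + 1) → 𝒜, ‖a (concat w x) * ((JBirk J (k + 1) w x ^ s : ℝ) : ℂ)‖)
    (hy : Summable fun k : ℕ =>
      ∑ w : Fin (k + 1) → 𝒜, ‖a (concat w y) * ((JBirk J (k + 1) w x ^ s : ℝ) : ℂ)‖) :
    ‖zetaPlus J a x s - zetaMinus J a x y s‖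
      ≤ ((2 : ℝ) ^ α - 1)⁻¹ * HolConst α a * dOmega x y ^ α := by
  rw [zetaPlus, zetaMinus, ← (hx.of_norm_bounded fun k => norm_sum_le _ _).tsum_sub
    (hy.of_norm_bounded fun k => norm_sum_le _ _)]
  have hgeom := (hasSum_half_rpow_pow_succ hα).mul_left (HolConst α a * dOmega x y ^ α)
  rw [show HolConst α a * dOmega x y ^ α * ((2 : ℝ) ^ α - 1)⁻¹
    = ((2 : ℝ) ^ α - 1)⁻¹ * HolConst α a * dOmega x y ^ α by ring] at hgeom
  exact tsum_of_norm_bounded hgeom fun k => norm_sum_sub_sum_le hpos hsum hα ha x y hs (k + 1)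

end Series

lemma tendsto_sub_one_mul_of_norm_le {f : ℝ → ℂ} {B : ℝ} (hf : ∀ s, 1 < s → ‖f s‖ ≤ B) :
    Tendsto (fun s : ℝ => ((s : ℂ) - 1) * f s) (𝓝[>] 1) (𝓝 0) := by
  refine squeeze_zero_norm' (a := fun s => |s - 1| * B) ?_ ?_
  · filter_upwards [self_mem_nhdsWithin] with s hs
    rw [norm_mul, ← Complex.ofReal_one, ← Complex.ofReal_sub, Complex.norm_real,
      Real.norm_eq_abs]
    exact mul_le_mul_of_nonneg_left (hf s hs) (abs_nonneg _)
  · have hcont : Continuous fun s : ℝ => |s - 1| * B := by fun_prop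
    simpa using (hcont.tendsto 1).mono_left nhdsWithin_le_nhds

theorem statement3_general {𝒜 : Type} [Fintype 𝒜] [TopologicalSpace 𝒜]
    (hcard : 2 ≤ Fintype.card 𝒜)
    (α : ℝ) (hα : α ∈ Set.Ioo (0 : ℝ) 1)
    (J : Omega 𝒜 → ℝ) (hJ : IsGFunction J)
    (a : Omega 𝒜 → ℂ) (ha : IsHolderW α a) (x y : Omega 𝒜) :
    (∀ s : ℝ, 1 < s →
      Summable (fun k : ℕ =>
          ∑ w : Fin (k + 1) → 𝒜, ‖a (concat w x) * (((JBirk J (k + 1) w x) ^ s : ℝ) : ℂ)‖) ∧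
      Summable (fun k : ℕ =>
          ∑ w : Fin (k + 1) → 𝒜, ‖a (concat w y) * (((JBirk J (k + 1) w x) ^ s : ℝ) : ℂ)‖) ∧
      ‖zetaPlus J a x s - zetaMinus J a x y s‖
        ≤ ((2 : ℝ) ^ α - 1)⁻¹ * HolConst α a * (dOmega x y) ^ α) ∧
    Tendsto (fun s : ℝ => ((s : ℂ) - 1) * (zetaPlus J a x s - zetaMinus J a x y s))
      (𝓝[>] (1 : ℝ)) (𝓝 0) := by
  obtain ⟨hα0, -⟩ := hα
  obtain ⟨c, hc0, hc1, hc⟩ := hJ.exists_lt_one hcard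
  obtain ⟨-, hpos, hsum⟩ := hJ
  have hsummable : ∀ s : ℝ, 1 < s → ∀ z, Summable fun k : ℕ =>
      ∑ w : Fin (k + 1) → 𝒜, ‖a (concat w z) * (((JBirk J (k + 1) w x) ^ s : ℝ) : ℂ)‖ :=
    fun s hs z => summable_sum_norm_mul_JBirk_rpow hpos hsum hc0 hc1 hc
      (fun w => ha.norm_le hα0 w x) x z hs
  have hbound : ∀ s : ℝ, 1 < s → ‖zetaPlus J a x s - zetaMinus J a x y s‖
      ≤ ((2 : ℝ) ^ α - 1)⁻¹ * HolConst α a * (dOmega x y) ^ α :=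
    fun s hs => norm_zetaPlus_sub_zetaMinus_le hpos hsum hα0 ha hs.le
      (hsummable s hs x) (hsummable s hs y)
  exact ⟨fun s hs => ⟨hsummable s hs x, hsummable s hs y, hbound s hs⟩,
    tendsto_sub_one_mul_of_norm_le hbound⟩

/-- For a `g`-function `J` and `α`-Hölder `a`, the series `ζ₊(s)` and `ζ₋(s)` converge
absolutely for every `s > 1`, `|ζ₊(s) − ζ₋(s)| ≤ (2^α − 1)⁻¹ Hol_α(a) d(x,y)^α`, and
consequently `(s−1)[ζ₊(s) − ζ₋(s)] → 0` as `s → 1⁺`. -/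
theorem statement3 {𝒜 : Type} [Fintype 𝒜] [TopologicalSpace 𝒜] [DiscreteTopology 𝒜]
    (hcard : 2 ≤ Fintype.card 𝒜)
    (α : ℝ) (hα : α ∈ Set.Ioo (0 : ℝ) 1)
    (J : Omega 𝒜 → ℝ) (hJ : IsGFunction J)
    (a : Omega 𝒜 → ℂ) (ha : IsHolderW α a) (x y : Omega 𝒜) :
    (∀ s : ℝ, 1 < s →
      Summable (fun k : ℕ =>
          ∑ w : Fin (k + 1) → 𝒜, ‖a (concat w x) * (((JBirk J (k + 1) w x) ^ s : ℝ) : ℂ)‖) ∧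
      Summable (fun k : ℕ =>
          ∑ w : Fin (k + 1) → 𝒜, ‖a (concat w y) * (((JBirk J (k + 1) w x) ^ s : ℝ) : ℂ)‖) ∧
      ‖zetaPlus J a x s - zetaMinus J a x y s‖
        ≤ ((2 : ℝ) ^ α - 1)⁻¹ * HolConst α a * (dOmega x y) ^ α) ∧
    Tendsto (fun s : ℝ => ((s : ℂ) - 1) * (zetaPlus J a x s - zetaMinus J a x y s))
      (𝓝[>] (1 : ℝ)) (𝓝 0) :=
  statement3_general hcard α hα J hJ a ha x y

end GS
end

section
/- Let γ>2, let g be the Hofbauer potential on Ω={0,1}^ℕ, and fix z∈C₀. Then for every s>1 the series Σ_{n≥1} (L_{sg}^n 1_{[1]})(z) converges and equals (ζ(γs) − 1) / (1 − ζ(γs) ζ(γ)^{−s}). -/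
open Real MeasureTheory Filter Topology Set

open scoped Classical

namespace GS

/-- The Riemann zeta function `ζ(γ) = ∑_{n≥1} n^{-γ}` (for real `γ > 1`). -/
noncomputable def zetaR (γ : ℝ) : ℝ := ∑' n : ℕ, ((n : ℝ) + 1) ^ (-γ)

/-- The Hofbauer potential on `Ω = {0,1}^ℕ`:
`g = −log ζ(γ)` on `C₀ = [0]`, `g = −γ log((k+1)/k)` on `C_k = [1⋯10]` (`k ≥ 1`), and
`g((1,1,1,…)) = 0`. -/
noncomputable def hof (γ : ℝ) (x : Omega (Fin 2)) : ℝ :=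
  if h : ∀ n, x n = 1 then 0
  else
    let k := Nat.find (not_forall.mp h)
    if k = 0 then -Real.log (zetaR γ) else -γ * Real.log (((k : ℝ) + 1) / (k : ℝ))

/-- The indicator function of the cylinder `[1] = {x : x₁ = 1}`. -/
noncomputable def indOne (x : Omega (Fin 2)) : ℝ := if x 0 = 1 then 1 else 0

/-- `L_s^n = (L_{s g}^n 1_{[1]})(z)` for the Hofbauer potential `g`. -/
noncomputable def LsHof (γ s : ℝ) (z : Omega (Fin 2)) (n : ℕ) : ℝ :=
  (ruelle (fun x => s * hof γ x))^[n] indOne z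

/-- `(L_{s g}^n 𝟏)(z)` for the Hofbauer potential `g`. -/
noncomputable def MsHof (γ s : ℝ) (z : Omega (Fin 2)) (n : ℕ) : ℝ :=
  (ruelle (fun x => s * hof γ x))^[n] (fun _ => (1 : ℝ)) z

/-- `f'(1)` for `f(s) = ζ(γs) ζ(γ)^{−s}`:
`f′(1) = (γ ζ′(γ) − ζ(γ) log ζ(γ))/ζ(γ)`. -/
noncomputable def fprime (γ : ℝ) : ℝ :=
  (γ * deriv zetaR γ - zetaR γ * Real.log (zetaR γ)) / zetaR γ

end GS

/-! On `C_m` the transfer operator acts as `L φ(x) = ζ(γ)^{-s} φ(0x) + ((m+2)/(m+1))^{-γs} φ(1x)`,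
so `L^n 1_{[1]}` is constant on each `C_m` and these constants obey a scalar recursion. Unfolding it
up to the first prepended `0` gives, on `C₀`, the renewal equation
`u_{n+1} = ζ(γ)^{-s} ∑_{j ≤ n} (j+1)^{-γs} u_{n-j} + (n+2)^{-γs}`. Summing it gives
`∑ u = (ζ(γs) - 1) + ζ(γ)^{-s} ζ(γs) ∑ u`, and the series
converges since `ζ(γs) < ζ(γ) ≤ ζ(γ)^s` makes the renewal contracting. -/

open Finset

lemma sum_range_sum_range_mul_le {b u : ℕ → ℝ} (hb : ∀ n, 0 ≤ b n) (hu : ∀ n, 0 ≤ u n)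
    (N : ℕ) :
    ∑ n ∈ range N, ∑ j ∈ range (n + 1), b j * u (n - j)
      ≤ (∑ j ∈ range N, b j) * ∑ k ∈ range N, u k := by
  rw [sum_range_diag_flip N fun j k => b j * u k, sum_mul]
  refine sum_le_sum fun j _ => ?_
  rw [← mul_sum]
  exact mul_le_mul_of_nonneg_left
    (sum_le_sum_of_subset_of_nonneg (range_mono (Nat.sub_le N j)) fun k _ _ => hu k) (hb j)

section Renewal

variable {a B F : ℝ} {u b f : ℕ → ℝ}

lemma summable_of_renewal (hu : ∀ n, 0 ≤ u n) (hb : ∀ n, 0 ≤ b n) (hf : ∀ n, 0 ≤ f n)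
    (ha : 0 ≤ a) (hbB : HasSum b B) (hfF : HasSum f F) (haB : a * B < 1)
    (hrenewal : ∀ n, u (n + 1) = a * ∑ j ∈ range (n + 1), b j * u (n - j) + f n) :
    Summable u := by
  refine summable_of_sum_range_le hu (c := (u 0 + F) / (1 - a * B)) fun N => ?_
  have hpartial : ∑ n ∈ range (N + 1), u n ≤ u 0 + a * B * ∑ n ∈ range (N + 1), u n + F := by
    have hconv := sum_range_sum_range_mul_le hb hu N
    have hbN : ∑ j ∈ range N, b j ≤ B := sum_le_hasSum _ (fun j _ => hb j) hbB
    have hfN : ∑ n ∈ range N, f n ≤ F := sum_le_hasSum _ (fun n _ => hf n) hfF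
    have huN : ∑ k ∈ range N, u k ≤ ∑ k ∈ range (N + 1), u k :=
      sum_le_sum_of_subset_of_nonneg (range_mono N.le_succ) fun k _ _ => hu k
    have hB : 0 ≤ B := hbB.nonneg hb
    calc ∑ n ∈ range (N + 1), u n
        = a * ∑ n ∈ range N, ∑ j ∈ range (n + 1), b j * u (n - j) + ∑ n ∈ range N, f n + u 0 := by
          rw [sum_range_succ', sum_congr rfl fun n _ => hrenewal n, sum_add_distrib, ← mul_sum]
      _ ≤ a * (B * ∑ k ∈ range (N + 1), u k) + F + u 0 := by
          gcongr
          calc _ ≤ (∑ j ∈ range N, b j) * ∑ k ∈ range N, u k := hconv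
            _ ≤ B * ∑ k ∈ range (N + 1), u k :=
              mul_le_mul hbN huN (sum_nonneg fun k _ => hu k) hB
      _ = u 0 + a * B * ∑ n ∈ range (N + 1), u n + F := by ring
  calc ∑ n ∈ range N, u n ≤ ∑ n ∈ range (N + 1), u n :=
        sum_le_sum_of_subset_of_nonneg (range_mono N.le_succ) fun k _ _ => hu k
    _ ≤ (u 0 + F) / (1 - a * B) := by
        rw [le_div_iff₀ (by linarith)]
        linarith

theorem hasSum_of_renewal (hu : ∀ n, 0 ≤ u n) (hb : ∀ n, 0 ≤ b n) (hf : ∀ n, 0 ≤ f n)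
    (ha : 0 ≤ a) (hbB : HasSum b B) (hfF : HasSum f F) (haB : a * B < 1)
    (hrenewal : ∀ n, u (n + 1) = a * ∑ j ∈ range (n + 1), b j * u (n - j) + f n) :
    HasSum u ((u 0 + F) / (1 - a * B)) := by
  have hsum := summable_of_renewal hu hb hf ha hbB hfF haB hrenewal
  have hb' := summable_norm_iff.mpr hbB.summable
  have hu' := summable_norm_iff.mpr hsum
  have hconv : HasSum (fun n => ∑ j ∈ range (n + 1), b j * u (n - j)) (B * ∑' n, u n) := by
    rw [← hbB.tsum_eq, tsum_mul_tsum_eq_tsum_sum_range_of_summable_norm hb' hu']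
    exact (summable_norm_sum_mul_range_of_summable_norm hb' hu').of_norm.hasSum
  have hfixed : ∑' n, u n = u 0 + (a * (B * ∑' n, u n) + F) := by
    conv_lhs =>
      rw [hsum.tsum_eq_zero_add, tsum_congr hrenewal, ((hconv.mul_left a).add hfF).tsum_eq]
  convert hsum.hasSum using 1
  rw [div_eq_iff (by linarith)]
  linear_combination -hfixed

end Renewal

namespace GS

noncomputable def zetaTerm (t : ℝ) (n : ℕ) : ℝ := ((n : ℝ) + 1) ^ (-t)

lemma zetaTerm_nonneg (t : ℝ) (n : ℕ) : 0 ≤ zetaTerm t n := by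
  unfold zetaTerm; positivity

lemma hasSum_zetaTerm {t : ℝ} (ht : 1 < t) : HasSum (zetaTerm t) (zetaR t) := by
  have h : Summable fun n : ℕ => ((n + 1 : ℕ) : ℝ) ^ (-t) :=
    (summable_nat_add_iff 1).mpr (Real.summable_nat_rpow.mpr (by linarith))
  push_cast at h
  exact h.hasSum

lemma hasSum_zetaTerm_succ {t : ℝ} (ht : 1 < t) :
    HasSum (fun n => zetaTerm t (n + 1)) (zetaR t - 1) := by
  have h := (hasSum_nat_add_iff' 1).mpr (hasSum_zetaTerm ht)
  simpa [zetaTerm] using h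

lemma one_le_zetaR {t : ℝ} (ht : 1 < t) : 1 ≤ zetaR t := by
  simpa [zetaTerm] using
    le_hasSum (hasSum_zetaTerm ht) 0 fun n _ => zetaTerm_nonneg t n

lemma zetaR_lt_zetaR {t t' : ℝ} (ht : 1 < t) (htt' : t < t') : zetaR t' < zetaR t :=
  hasSum_lt (f := zetaTerm t') (i := 1)
    (fun n => Real.rpow_le_rpow_of_exponent_le (by simp) (neg_le_neg htt'.le))
    (Real.rpow_lt_rpow_of_exponent_lt (by norm_num) (neg_lt_neg htt'))
    (hasSum_zetaTerm (ht.trans htt')) (hasSum_zetaTerm ht)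

lemma zetaR_mul_lt_rpow {γ s : ℝ} (hγ : 1 < γ) (hs : 1 < s) : zetaR (γ * s) < zetaR γ ^ s :=
  calc zetaR (γ * s) < zetaR γ := zetaR_lt_zetaR hγ (lt_mul_of_one_lt_right (by linarith) hs)
    _ = zetaR γ ^ (1 : ℝ) := (Real.rpow_one _).symm
    _ ≤ zetaR γ ^ s := Real.rpow_le_rpow_of_exponent_le (one_le_zetaR hγ) hs.le

/-- `runWeight (γ s) m j = e^{s S_j g (1^j x)}` for `x ∈ C_m`: the factors `((k+1)/k)^{-γ s}`
of the ones prepended to `x` telescope. -/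
noncomputable def runWeight (t : ℝ) (m j : ℕ) : ℝ := (((m : ℝ) + j + 1) / ((m : ℝ) + 1)) ^ (-t)

lemma runWeight_zero_right (t : ℝ) (m : ℕ) : runWeight t m 0 = 1 := by
  simp [runWeight, div_self (by positivity : (m : ℝ) + 1 ≠ 0)]

lemma runWeight_zero_left (t : ℝ) (j : ℕ) : runWeight t 0 j = zetaTerm t j := by
  simp [runWeight, zetaTerm]

lemma runWeight_one_mul (t : ℝ) (m j : ℕ) :
    runWeight t m 1 * runWeight t (m + 1) j = runWeight t m (j + 1) := by
  unfold runWeight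
  rw [← Real.mul_rpow (by positivity) (by positivity)]
  congr 1
  push_cast
  field_simp
  ring

/-- `runSeq (ζ(γ)^{-s}) (γ s) n m` is the value of `L_{sg}^n 1_{[1]}` on `C_m`. -/
noncomputable def runSeq (a t : ℝ) : ℕ → ℕ → ℝ
  | 0, m => if m = 0 then 0 else 1
  | n + 1, m => a * runSeq a t n 0 + runWeight t m 1 * runSeq a t n (m + 1)

lemma runSeq_nonneg {a : ℝ} (ha : 0 ≤ a) (t : ℝ) (n : ℕ) : ∀ m, 0 ≤ runSeq a t n m := by
  induction n with
  | zero => intro m; unfold runSeq; split <;> norm_num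
  | succ n ih =>
    intro m
    have := ih 0
    have := ih (m + 1)
    have : 0 ≤ runWeight t m 1 := by unfold runWeight; positivity
    unfold runSeq
    positivity

/-- Unfolding the recursion up to the first prepended `0`: `j` ones (weight `runWeight t m j`),
then a `0` (weight `a`) landing in `C₀`; if no `0` is prepended the point ends up in `[1]`. -/
lemma runSeq_succ (a t : ℝ) (n : ℕ) : ∀ m, runSeq a t (n + 1) m
    = a * ∑ j ∈ range (n + 1), runWeight t m j * runSeq a t (n - j) 0 + runWeight t m (n + 1) := by
  induction n with
  | zero => intro m; simp [runSeq]
  | succ n ih =>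
    intro m
    rw [runSeq, ih (m + 1), sum_range_succ' _ (n + 1)]
    simp only [runWeight_zero_right, Nat.add_sub_add_right, Nat.sub_zero,
      ← runWeight_one_mul t m (n + 1)]
    have hshift : ∑ j ∈ range (n + 1), runWeight t m (j + 1) * runSeq a t (n - j) 0
        = runWeight t m 1 * ∑ j ∈ range (n + 1), runWeight t (m + 1) j * runSeq a t (n - j) 0 := by
      rw [mul_sum]
      exact sum_congr rfl fun j _ => by rw [← runWeight_one_mul]; ring
    rw [hshift]
    ring

lemma hasSum_runSeq {a t : ℝ} (ha : 0 ≤ a) (ht : 1 < t) (hat : a * zetaR t < 1) :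
    HasSum (fun n => runSeq a t n 0) ((zetaR t - 1) / (1 - a * zetaR t)) := by
  have h := hasSum_of_renewal (u := fun n => runSeq a t n 0) (runSeq_nonneg ha t · 0)
    (zetaTerm_nonneg t) (fun n => zetaTerm_nonneg t (n + 1)) ha (hasSum_zetaTerm ht)
    (hasSum_zetaTerm_succ ht) hat fun n => by
      simpa only [runWeight_zero_left] using runSeq_succ a t n 0
  simpa [runSeq] using h

/-- The paper's cylinder `C_m`. -/
def cylC (m : ℕ) : Set (Omega (Fin 2)) := {x | (∀ i < m, x i = 1) ∧ x m = 0}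

lemma cons_zero_mem_cylC (x : Omega (Fin 2)) : cons 0 x ∈ cylC 0 :=
  ⟨fun _ hi => absurd hi (Nat.not_lt_zero _), rfl⟩

lemma cons_one_mem_cylC {x : Omega (Fin 2)} {m : ℕ} (hx : x ∈ cylC m) :
    cons 1 x ∈ cylC (m + 1) := by
  refine ⟨fun i hi => ?_, hx.2⟩
  cases i with
  | zero => rfl
  | succ i => exact hx.1 i (Nat.lt_of_succ_lt_succ hi)

lemma hof_of_mem_cylC (γ : ℝ) {x : Omega (Fin 2)} {m : ℕ} (hx : x ∈ cylC m) :
    hof γ x = if m = 0 then -Real.log (zetaR γ) else -γ * Real.log (((m : ℝ) + 1) / m) := by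
  have hne : ¬ ∀ n, x n = 1 := fun h => absurd (hx.2 ▸ h m) (by decide)
  have hfind : Nat.find (not_forall.mp hne) = m :=
    (Nat.find_eq_iff _).mpr ⟨by simp [hx.2], fun i hi => by simp [hx.1 i hi]⟩
  simp only [hof, dif_neg hne, hfind]

lemma ruelle_hof_of_mem_cylC {γ : ℝ} (hγ : 1 < γ) (s : ℝ) (φ : Omega (Fin 2) → ℝ)
    {x : Omega (Fin 2)} {m : ℕ} (hx : x ∈ cylC m) :
    ruelle (fun y => s * hof γ y) φ x
      = zetaR γ ^ (-s) * φ (cons 0 x) + runWeight (γ * s) m 1 * φ (cons 1 x) := by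
  have hζ : 0 < zetaR γ := one_pos.trans_le (one_le_zetaR hγ)
  have hratio : (0 : ℝ) < ((m : ℝ) + 1 + 1) / ((m : ℝ) + 1) := by positivity
  have h0 : Real.exp (s * hof γ (cons 0 x)) = zetaR γ ^ (-s) := by
    rw [hof_of_mem_cylC γ (cons_zero_mem_cylC x), if_pos rfl, Real.rpow_def_of_pos hζ]
    ring_nf
  have h1 : Real.exp (s * hof γ (cons 1 x)) = runWeight (γ * s) m 1 := by
    rw [hof_of_mem_cylC γ (cons_one_mem_cylC hx), if_neg m.succ_ne_zero, runWeight,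
      Nat.cast_one, Nat.cast_succ, Real.rpow_def_of_pos hratio]
    ring_nf
  simp only [ruelle, Fin.sum_univ_two, smul_eq_mul, h0, h1]

lemma iterate_ruelle_hof_indOne {γ : ℝ} (hγ : 1 < γ) (s : ℝ) (n : ℕ) :
    ∀ {x : Omega (Fin 2)} {m : ℕ}, x ∈ cylC m →
      (ruelle (fun y => s * hof γ y))^[n] indOne x = runSeq (zetaR γ ^ (-s)) (γ * s) n m := by
  induction n with
  | zero =>
    intro x m hx
    rcases m with _ | m
    · simp [indOne, runSeq, hx.2]
    · simp [indOne, runSeq, hx.1 0 m.succ_pos]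
  | succ n ih =>
    intro x m hx
    rw [Function.iterate_succ_apply', ruelle_hof_of_mem_cylC hγ s _ hx,
      ih (cons_zero_mem_cylC x), ih (cons_one_mem_cylC hx), runSeq]

/-- the zeta function of the Hofbauer model.
For `γ > 2`, `z ∈ C₀` and every `s > 1`, the series `∑_{n≥1} (L_{sg}^n 1_{[1]})(z)` converges
and equals `(ζ(γs) − 1)/(1 − ζ(γs) ζ(γ)^{−s})`. -/
theorem statement10 (γ : ℝ) (hγ : 2 < γ) (z : Omega (Fin 2)) (hz : z 0 = 0)
    (s : ℝ) (hs : 1 < s) :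
    Summable (fun n : ℕ => LsHof γ s z (n + 1)) ∧
      ∑' n : ℕ, LsHof γ s z (n + 1)
        = (zetaR (γ * s) - 1) / (1 - zetaR (γ * s) * zetaR γ ^ (-s)) := by
  have hγ1 : 1 < γ := by linarith
  have hζ : 0 < zetaR γ := one_pos.trans_le (one_le_zetaR hγ1)
  have hcontract : zetaR γ ^ (-s) * zetaR (γ * s) < 1 := by
    rw [Real.rpow_neg hζ.le, inv_mul_lt_one₀ (Real.rpow_pos_of_pos hζ s)]
    exact zetaR_mul_lt_rpow hγ1 hs
  have hsum := hasSum_runSeq (Real.rpow_nonneg hζ.le (-s)) (by nlinarith) hcontract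
  have hz' : z ∈ cylC 0 := ⟨fun _ hi => absurd hi (Nat.not_lt_zero _), hz⟩
  have htail : HasSum (fun n => LsHof γ s z (n + 1))
      ((zetaR (γ * s) - 1) / (1 - zetaR (γ * s) * zetaR γ ^ (-s))) := by
    simpa [LsHof, iterate_ruelle_hof_indOne hγ1 s _ hz', runSeq, mul_comm] using
      (hasSum_nat_add_iff' 1).mpr hsum
  exact ⟨htail.summable, htail.tsum_eq⟩

end GS
end

section
/- Let J be a g-function and fix x,y∈Ω. Then A₀ := {a∈C(Ω,ℂ) : Σ_{w∈W*} |a(wx)−a(wy)|/𝕁(wx) < ∞} is a subalgebra of C(Ω,ℂ) that is closed under complex conjugation, contains all locally constant functions (functions depending on only finitely many coordinates), and is dense in C(Ω,ℂ) in the uniform norm. -/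
/-!
If `a` depends only on the first `n` coordinates, then `a (w x) = a (w y)` for every word of
length at least `n`, so the defining series of `A₀` has finitely many nonzero terms. The
difference `a (w x) - a (w y)` of a sum, product or conjugate is bounded by a fixed combination of
those of the factors, so `A₀` is a star subalgebra. The indicators of one-coordinate cylinders are
locally constant and separate points of the compact space `Ω`, hence Stone–Weierstrass gives
density.
-/

open Real MeasureTheory Filter Topology Set

open scoped Classical

namespace GS

/-- The set `A₀ = {a ∈ C(Ω,ℂ) : ∑_{w∈W*} |a(wx)−a(wy)|/𝕁(wx) < ∞}` of continuous functions
with bounded commutator `[D, L_a]`. -/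
noncomputable def A0 {𝒜 : Type} [Fintype 𝒜] [TopologicalSpace 𝒜]
    (J : Omega 𝒜 → ℝ) (x y : Omega 𝒜) : Set C(Omega 𝒜, ℂ) :=
  {a | Summable (fun w : Words 𝒜 =>
    ‖a (concat w.2 x) - a (concat w.2 y)‖ / JBirk J (w.1 + 1) w.2 x)}

section A0

variable {𝒜 : Type} [Fintype 𝒜] [TopologicalSpace 𝒜] {J : Omega 𝒜 → ℝ} {x y : Omega 𝒜}

lemma mem_A0_of_norm_sub_le {a b c : C(Omega 𝒜, ℂ)} (ha : a ∈ A0 J x y) (hb : b ∈ A0 J x y)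
    (s t : ℝ) (h : ∀ u v, ‖c u - c v‖ ≤ s * ‖a u - a v‖ + t * ‖b u - b v‖) :
    c ∈ A0 J x y := by
  refine Summable.of_nonneg_of_le (fun _ => div_nonneg (norm_nonneg _) (Real.exp_pos _).le)
    (fun w => ?_) ((Summable.mul_left s ha).add (Summable.mul_left t hb))
  rw [mul_div_assoc', mul_div_assoc', ← add_div]
  exact div_le_div_of_nonneg_right (h _ _) (Real.exp_pos _).le

lemma mem_A0_of_depends_on_prefix (a : C(Omega 𝒜, ℂ)) (n : ℕ)
    (h : ∀ u v : Omega 𝒜, (∀ i < n, u i = v i) → a u = a v) : a ∈ A0 J x y := by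
  refine summable_of_ne_finset_zero (s := (Finset.range n).sigma fun _ => Finset.univ) ?_
  rintro ⟨k, w⟩ hw
  have hnk : n ≤ k := not_lt.1 fun hk =>
    hw (Finset.mem_sigma.2 ⟨Finset.mem_range.2 hk, Finset.mem_univ _⟩)
  have hwxy : a (concat w x) = a (concat w y) :=
    h _ _ fun i hi => by simp only [concat, dif_pos (show i < k + 1 by omega)]
  simp [hwxy]

variable (J x y)

noncomputable def A0StarSubalgebra : StarSubalgebra ℂ C(Omega 𝒜, ℂ) where
  carrier := A0 J x y
  algebraMap_mem' c := mem_A0_of_depends_on_prefix _ 0 fun _ _ _ => rfl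
  add_mem' {a b} ha hb := mem_A0_of_norm_sub_le ha hb 1 1 fun u v => by
    simpa [add_sub_add_comm] using norm_add_le (a u - a v) (b u - b v)
  mul_mem' {a b} ha hb := mem_A0_of_norm_sub_le ha hb ‖b‖ ‖a‖ fun u v => by
    have hdecomp : a u * b u - a v * b v = (a u - a v) * b u + a v * (b u - b v) := by ring
    calc ‖(a * b) u - (a * b) v‖ ≤ ‖a u - a v‖ * ‖b u‖ + ‖a v‖ * ‖b u - b v‖ := by
          simpa [hdecomp] using norm_add_le ((a u - a v) * b u) (a v * (b u - b v))
      _ ≤ ‖b‖ * ‖a u - a v‖ + ‖a‖ * ‖b u - b v‖ := by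
          rw [mul_comm ‖b‖]
          gcongr
          exacts [b.norm_coe_le_norm u, a.norm_coe_le_norm v]
  star_mem' {a} ha := mem_A0_of_norm_sub_le ha ha 1 0 fun u v => by
    rw [ContinuousMap.star_apply, ContinuousMap.star_apply, ← star_sub, norm_star]
    linarith

lemma A0StarSubalgebra_separatesPoints [DiscreteTopology 𝒜] :
    (A0StarSubalgebra J x y).SeparatesPoints := by
  intro u v huv
  obtain ⟨i, hi⟩ := Function.ne_iff.1 huv
  let g : C(Omega 𝒜, ℂ) :=
    (⟨fun q => if q = u i then 1 else 0, continuous_of_discreteTopology⟩ : C(𝒜, ℂ)).comp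
      ⟨fun z => z i, continuous_apply i⟩
  have hg : g ∈ A0 J x y := mem_A0_of_depends_on_prefix g (i + 1) fun u' v' h => by
    simp [g, h i (Nat.lt_succ_self i)]
  exact ⟨g, ⟨g, hg, rfl⟩, by simp [g, Ne.symm hi]⟩

lemma dense_A0 [DiscreteTopology 𝒜] : Dense (A0 J x y) := by
  have hclosure := ContinuousMap.starSubalgebra_topologicalClosure_eq_top_of_separatesPoints _
    (A0StarSubalgebra_separatesPoints J x y)
  change Dense (A0StarSubalgebra J x y : Set C(Omega 𝒜, ℂ))
  rw [dense_iff_closure_eq, ← StarSubalgebra.topologicalClosure_coe, hclosure]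
  rfl

end A0

theorem statement14_general {𝒜 : Type} [Fintype 𝒜] [TopologicalSpace 𝒜] [DiscreteTopology 𝒜]
    (J : Omega 𝒜 → ℝ) (x y : Omega 𝒜) :
    (∃ S : StarSubalgebra ℂ C(Omega 𝒜, ℂ), (S : Set C(Omega 𝒜, ℂ)) = A0 J x y) ∧
    (∀ a : C(Omega 𝒜, ℂ),
      (∃ n : ℕ, ∀ u v : Omega 𝒜, (∀ i < n, u i = v i) → a u = a v) → a ∈ A0 J x y) ∧
    Dense (A0 J x y) :=
  ⟨⟨A0StarSubalgebra J x y, rfl⟩, fun a ⟨n, hn⟩ => mem_A0_of_depends_on_prefix a n hn,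
    dense_A0 J x y⟩

/-- denseness of `{a : ‖[D,L_a]‖ < ∞}`.
For a `g`-function `J` and fixed `x, y ∈ Ω`, the set `A₀` is a subalgebra of `C(Ω,ℂ)` closed
under complex conjugation (i.e. it is the underlying set of a star subalgebra), contains all
locally constant functions, and is dense in `C(Ω,ℂ)` for the uniform norm. -/
theorem statement14 {𝒜 : Type} [Fintype 𝒜] [TopologicalSpace 𝒜] [DiscreteTopology 𝒜]
    (hcard : 2 ≤ Fintype.card 𝒜)
    (J : Omega 𝒜 → ℝ) (hJ : IsGFunction J) (x y : Omega 𝒜) :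
    (∃ S : StarSubalgebra ℂ C(Omega 𝒜, ℂ), (S : Set C(Omega 𝒜, ℂ)) = A0 J x y) ∧
    (∀ a : C(Omega 𝒜, ℂ),
      (∃ n : ℕ, ∀ u v : Omega 𝒜, (∀ i < n, u i = v i) → a u = a v) → a ∈ A0 J x y) ∧
    Dense (A0 J x y) :=
  statement14_general J x y

end GS
end
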